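/- In the two-period Stackelberg game, for every initial opinion p₀ ∈ [0,1] and state s₁, elite A's optimal period-1 choice lies in the four-point set {p₀, 1/2, 1/2 + Δ, 1/2 - Δ}: every other p₁ ∈ [0,1] is weakly dominated by one of these four points in the objective u_A(y(p₁), s₁) - c(p₁ - p₀) + β·Φ(p₁). -/

import Mathlib

/-!
Write A's objective as a gross payoff (current payoff plus discounted continuation value)
minus the cost `c (p₁ - p₀)`. The gross payoff is constant on each of the cells
`(-∞, 1/2 - Δ]`, `(1/2 - Δ, 1/2)`, `{1/2}`, `(1/2, 1/2 + Δ)`, `[1/2 + Δ, ∞)`, and on the two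
open cells it is no larger than anywhere on the same side of `1/2`: there A neither wins today
nor locks in the future. Since `c` is even and increasing on `[0, ∞)`, the cost only grows as
`p₁` moves away from `p₀`. So `p₁` can be clamped towards `p₀` (within its outer cell, or up to
`1/2` from an open cell) without loss, and the clamped point is `p₀`, `1/2` or `1/2 ± Δ`.
-/

/-- Elite A's period-1 objective: current payoff `u_A(y(p₁), s₁)` (with the tie at
`p₁ = 1/2` broken in A's favor), minus the persuasion cost from `p₀`, plus the discounted
continuation value `Φ(p₁)` induced by B's best response. -/
noncomputable def Jobj (c : ℝ → ℝ) (H β pr Δ p₀ : ℝ) (s₁ : Bool) (p₁ : ℝ) : ℝ :=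
  (if (1 : ℝ) / 2 < p₁ then (if s₁ then H else 0)
    else if p₁ = 1 / 2 then H else (if s₁ then 0 else H))
  - c (p₁ - p₀)
  + β * (if p₁ ≤ 1 / 2 - Δ then (1 - pr) * H
          else if 1 / 2 + Δ ≤ p₁ then pr * H else 0)

open Set

section Clamp

variable {α : Type*} [LinearOrder α] {a b p : α}

lemma min_mem_uIcc_of_le (h : p ≤ a) : min b a ∈ uIcc b p := by
  rw [mem_uIcc]
  rcases le_total b a with hba | hab
  · simp [min_eq_left hba, le_total]
  · right; simp [h, hab]

lemma max_mem_uIcc_of_le (h : a ≤ p) : max b a ∈ uIcc b p := by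
  rw [mem_uIcc]
  rcases le_total b a with hba | hab
  · left; simp [h, hba]
  · simp [max_eq_left hab, le_total]

end Clamp

lemma apply_le_apply_of_abs_le {c : ℝ → ℝ} (hceven : ∀ x, c (-x) = c x)
    (hcmono : MonotoneOn c (Ici 0)) {x y : ℝ} (h : |x| ≤ |y|) : c x ≤ c y := by
  have habs : ∀ z, c |z| = c z := fun z => by
    rcases abs_cases z with ⟨hz, _⟩ | ⟨hz, _⟩ <;> simp [hz, hceven]
  rw [← habs x, ← habs y]
  exact hcmono (abs_nonneg x) (abs_nonneg y) h

lemma cost_sub_le_of_mem_uIcc {c : ℝ → ℝ} (hceven : ∀ x, c (-x) = c x)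
    (hcmono : MonotoneOn c (Ici 0)) {p₀ p q : ℝ} (hq : q ∈ uIcc p₀ p) :
    c (q - p₀) ≤ c (p - p₀) :=
  apply_le_apply_of_abs_le hceven hcmono (abs_sub_left_of_mem_uIcc hq)

noncomputable def grossPayoff (H β pr Δ : ℝ) (s₁ : Bool) (p₁ : ℝ) : ℝ :=
  (if (1 : ℝ) / 2 < p₁ then (if s₁ then H else 0)
    else if p₁ = 1 / 2 then H else (if s₁ then 0 else H))
  + β * (if p₁ ≤ 1 / 2 - Δ then (1 - pr) * H
          else if 1 / 2 + Δ ≤ p₁ then pr * H else 0)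

lemma Jobj_eq_grossPayoff_sub (c : ℝ → ℝ) (H β pr Δ p₀ : ℝ) (s₁ : Bool) (p₁ : ℝ) :
    Jobj c H β pr Δ p₀ s₁ p₁ = grossPayoff H β pr Δ s₁ p₁ - c (p₁ - p₀) := by
  unfold Jobj grossPayoff
  ring

namespace grossPayoff

variable {H β pr Δ p q : ℝ} {s₁ : Bool}

lemma of_le_lower (hΔ : 0 < Δ) (hp : p ≤ 1 / 2 - Δ) :
    grossPayoff H β pr Δ s₁ p = (if s₁ then 0 else H) + β * ((1 - pr) * H) := by
  have hp' : p < 1 / 2 := by linarith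
  rw [grossPayoff, if_neg hp'.not_gt, if_neg hp'.ne, if_pos hp]

lemma of_mem_Ioo_lower (hp : p ∈ Ioo (1 / 2 - Δ) (1 / 2)) :
    grossPayoff H β pr Δ s₁ p = if s₁ then 0 else H := by
  obtain ⟨hlo, hhi⟩ := hp
  have hup : ¬ 1 / 2 + Δ ≤ p := by linarith
  rw [grossPayoff, if_neg hhi.not_gt, if_neg hhi.ne, if_neg hlo.not_ge, if_neg hup,
    mul_zero, add_zero]

lemma half (hΔ : 0 < Δ) : grossPayoff H β pr Δ s₁ (1 / 2) = H := by
  have hlo : ¬ (1 : ℝ) / 2 ≤ 1 / 2 - Δ := by linarith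
  have hup : ¬ (1 : ℝ) / 2 + Δ ≤ 1 / 2 := by linarith
  rw [grossPayoff, if_neg (lt_irrefl _), if_pos rfl, if_neg hlo, if_neg hup, mul_zero,
    add_zero]

lemma of_mem_Ioo_upper (hp : p ∈ Ioo (1 / 2) (1 / 2 + Δ)) :
    grossPayoff H β pr Δ s₁ p = if s₁ then H else 0 := by
  obtain ⟨hlo, hhi⟩ := hp
  have hdown : ¬ p ≤ 1 / 2 - Δ := by linarith
  rw [grossPayoff, if_pos hlo, if_neg hdown, if_neg hhi.not_ge, mul_zero, add_zero]

lemma of_upper_le (hΔ : 0 < Δ) (hp : 1 / 2 + Δ ≤ p) :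
    grossPayoff H β pr Δ s₁ p = (if s₁ then H else 0) + β * (pr * H) := by
  have hp' : 1 / 2 < p := by linarith
  have hdown : ¬ p ≤ 1 / 2 - Δ := by linarith
  rw [grossPayoff, if_pos hp', if_neg hdown, if_pos hp]

lemma le_of_mem_Ioo_lower (hH : 0 ≤ H) (hβ : 0 ≤ β) (hpr : pr ≤ 1) (hΔ : 0 < Δ)
    (hp : p ∈ Ioo (1 / 2 - Δ) (1 / 2)) (hq : q ≤ 1 / 2) :
    grossPayoff H β pr Δ s₁ p ≤ grossPayoff H β pr Δ s₁ q := by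
  have hb : (if s₁ then 0 else H) ≤ H := by cases s₁ <;> simp [hH]
  rw [of_mem_Ioo_lower hp]
  rcases le_or_gt q (1 / 2 - Δ) with hq₁ | hq₁
  · rw [of_le_lower hΔ hq₁]
    have : 0 ≤ β * ((1 - pr) * H) := by
      have : 0 ≤ 1 - pr := by linarith
      positivity
    linarith
  rcases hq.lt_or_eq with hq₂ | rfl
  · rw [of_mem_Ioo_lower ⟨hq₁, hq₂⟩]
  · rwa [half hΔ]

lemma le_of_mem_Ioo_upper (hH : 0 ≤ H) (hβ : 0 ≤ β) (hpr : 0 ≤ pr) (hΔ : 0 < Δ)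
    (hp : p ∈ Ioo (1 / 2) (1 / 2 + Δ)) (hq : 1 / 2 ≤ q) :
    grossPayoff H β pr Δ s₁ p ≤ grossPayoff H β pr Δ s₁ q := by
  have hb : (if s₁ then H else 0) ≤ H := by cases s₁ <;> simp [hH]
  rw [of_mem_Ioo_upper hp]
  rcases le_or_gt (1 / 2 + Δ) q with hq₁ | hq₁
  · rw [of_upper_le hΔ hq₁]
    have : 0 ≤ β * (pr * H) := by positivity
    linarith
  rcases hq.lt_or_eq with hq₂ | rfl
  · rw [of_mem_Ioo_upper ⟨hq₂, hq₁⟩]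
  · rwa [half hΔ]

end grossPayoff

open grossPayoff in
lemma exists_candidate_mem_uIcc_grossPayoff_le {H β pr Δ : ℝ} (hH : 0 ≤ H) (hβ : 0 ≤ β)
    (hpr₀ : 0 ≤ pr) (hpr₁ : pr ≤ 1) (hΔ : 0 < Δ) (s₁ : Bool) (p₀ p : ℝ) :
    ∃ q ∈ ({p₀, 1 / 2, 1 / 2 + Δ, 1 / 2 - Δ} : Set ℝ),
      q ∈ uIcc p₀ p ∧ grossPayoff H β pr Δ s₁ p ≤ grossPayoff H β pr Δ s₁ q := by
  rcases le_or_gt p (1 / 2 - Δ) with hp₁ | hp₁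
  · refine ⟨min p₀ (1 / 2 - Δ), ?_, min_mem_uIcc_of_le hp₁, ?_⟩
    · rcases min_choice p₀ (1 / 2 - Δ) with h | h <;> rw [h] <;> simp
    · rw [of_le_lower hΔ hp₁, of_le_lower hΔ (min_le_right _ _)]
  rcases lt_trichotomy p (1 / 2) with hp₂ | rfl | hp₂
  · refine ⟨min p₀ (1 / 2), ?_, min_mem_uIcc_of_le hp₂.le, ?_⟩
    · rcases min_choice p₀ (1 / 2) with h | h <;> rw [h] <;> simp
    · exact le_of_mem_Ioo_lower hH hβ hpr₁ hΔ ⟨hp₁, hp₂⟩ (min_le_right _ _)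
  · exact ⟨1 / 2, by simp, right_mem_uIcc, le_rfl⟩
  rcases lt_or_ge p (1 / 2 + Δ) with hp₃ | hp₃
  · refine ⟨max p₀ (1 / 2), ?_, max_mem_uIcc_of_le hp₂.le, ?_⟩
    · rcases max_choice p₀ (1 / 2) with h | h <;> rw [h] <;> simp
    · exact le_of_mem_Ioo_upper hH hβ hpr₀ hΔ ⟨hp₂, hp₃⟩ (le_max_right _ _)
  · refine ⟨max p₀ (1 / 2 + Δ), ?_, max_mem_uIcc_of_le hp₃, ?_⟩
    · rcases max_choice p₀ (1 / 2 + Δ) with h | h <;> rw [h] <;> simp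
    · rw [of_upper_le hΔ hp₃, of_upper_le hΔ (le_max_right _ _)]

theorem four_point_candidate_set_general
    (c : ℝ → ℝ) (H β pr Δ : ℝ)
    (hceven : ∀ x, c (-x) = c x)
    (hcmono : StrictMonoOn c (Set.Ici (0 : ℝ)))
    (hH : 0 < H) (hβ : β ∈ Set.Ioo (0 : ℝ) 1) (hpr : pr ∈ Set.Ioo (0 : ℝ) 1)
    (hΔ : 0 < Δ)
    (p₀ : ℝ) (s₁ : Bool) :
    ∀ p₁ ∈ Set.Icc (0 : ℝ) 1,
      ∃ q ∈ ({p₀, 1 / 2, 1 / 2 + Δ, 1 / 2 - Δ} : Set ℝ),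
        Jobj c H β pr Δ p₀ s₁ p₁ ≤ Jobj c H β pr Δ p₀ s₁ q := by
  intro p₁ _
  obtain ⟨q, hq, hq_between, hgross⟩ := exists_candidate_mem_uIcc_grossPayoff_le hH.le
    hβ.1.le hpr.1.le hpr.2.le hΔ s₁ p₀ p₁
  refine ⟨q, hq, ?_⟩
  rw [Jobj_eq_grossPayoff_sub, Jobj_eq_grossPayoff_sub]
  linarith [cost_sub_le_of_mem_uIcc hceven hcmono.monotoneOn hq_between]

/-- Elite A's optimal period-1 choice lies in the four-point set
`{p₀, 1/2, 1/2 + Δ, 1/2 - Δ}`: every other `p₁ ∈ [0,1]` is weakly dominated. -/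
theorem four_point_candidate_set
    (c : ℝ → ℝ) (H β pr Δ : ℝ)
    (hc0 : c 0 = 0)
    (hceven : ∀ x, c (-x) = c x)
    (hcmono : StrictMonoOn c (Set.Ici (0 : ℝ)))
    (hcconv : StrictConvexOn ℝ Set.univ c)
    (hH : 0 < H) (hβ : β ∈ Set.Ioo (0 : ℝ) 1) (hpr : pr ∈ Set.Ioo (0 : ℝ) 1)
    (hΔ : 0 < Δ) (hcΔ : c Δ = H) (hΔle : Δ ≤ 1 / 2)
    (p₀ : ℝ) (hp₀ : p₀ ∈ Set.Icc (0 : ℝ) 1) (s₁ : Bool) :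
    ∀ p₁ ∈ Set.Icc (0 : ℝ) 1,
      ∃ q ∈ ({p₀, 1 / 2, 1 / 2 + Δ, 1 / 2 - Δ} : Set ℝ),
        Jobj c H β pr Δ p₀ s₁ p₁ ≤ Jobj c H β pr Δ p₀ s₁ q :=
  four_point_candidate_set_general c H β pr Δ hceven hcmono hH hβ hpr hΔ p₀ s₁
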